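/- Let B be an analytic function on the unit disc D with |B(z)| ≤ 1 for all z ∈ D, let {a_n} be a sequence in D with B(a_n) = 0 for all n and inf_n (1-|a_n|²)|B'(a_n)| > 0, and let G be analytic in D with |G(a_n)| → ∞ as n → ∞. Then the product f = B·G is not a normal function; that is, sup_{z∈D} (1-|z|²)|f'(z)|/(1+|f(z)|²) = ∞ (and in particular f is not a Bloch function). -/

import Mathlib

open Complex Filter Set

/-- Let `B` be analytic on the unit disc with `|B| ≤ 1`, vanishing on a sequence
`{a_n} ⊂ D` with `inf_n (1-|a_n|²)|B'(a_n)| > 0` (the interpolating condition), and let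
`G` be analytic on the disc with `|G(a_n)| → ∞`. Then `f = B · G` is not a normal
function (and in particular is not a Bloch function). -/
theorem stmt13
    (B : ℂ → ℂ) (hB : DifferentiableOn ℂ B (Metric.ball (0 : ℂ) 1))
    (hB1 : ∀ z ∈ Metric.ball (0 : ℂ) 1, ‖B z‖ ≤ 1)
    (a : ℕ → ℂ) (ha : ∀ n, a n ∈ Metric.ball (0 : ℂ) 1)
    (hzero : ∀ n, B (a n) = 0)
    (hsep : ∃ δ : ℝ, 0 < δ ∧ ∀ n,
      δ ≤ (1 - ‖a n‖ ^ 2) * ‖deriv B (a n)‖)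
    (G : ℂ → ℂ) (hG : DifferentiableOn ℂ G (Metric.ball (0 : ℂ) 1))
    (hGtop : Tendsto (fun n => ‖G (a n)‖) atTop atTop) :
    ¬ ∃ C : ℝ, ∀ z ∈ Metric.ball (0 : ℂ) 1,
      (1 - ‖z‖ ^ 2) * ‖deriv (fun w => B w * G w) z‖
        / (1 + ‖B z * G z‖ ^ 2) ≤ C := by
  rintro ⟨C, hC⟩
  obtain ⟨δ, hδ, hδle⟩ := hsep
  obtain ⟨n, hn⟩ := (hGtop.eventually_gt_atTop ((C + 1) / δ)).exists
  have hffC := hC (a n) (ha n)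
  have hBd : DifferentiableAt ℂ B (a n) :=
    hB.differentiableAt (Metric.isOpen_ball.mem_nhds (ha n))
  have hGd : DifferentiableAt ℂ G (a n) :=
    hG.differentiableAt (Metric.isOpen_ball.mem_nhds (ha n))
  have hderiv : deriv (fun w => B w * G w) (a n) = deriv B (a n) * G (a n) := by
    rw [deriv_fun_mul hBd hGd, hzero n]; ring
  rw [hderiv, hzero n, zero_mul, norm_zero, norm_mul] at hffC
  norm_num at hffC
  have h1 : (0 : ℝ) ≤ 1 - ‖a n‖ ^ 2 := by
    have h := mem_ball_zero_iff.mp (ha n)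
    nlinarith [norm_nonneg (a n)]
  have hge : δ * ‖G (a n)‖ ≤ C := by
    have h2 := hδle n
    nlinarith [norm_nonneg (G (a n)), norm_nonneg (deriv B (a n))]
  have h3 : C + 1 < ‖G (a n)‖ * δ := (div_lt_iff₀ hδ).mp hn
  nlinarith
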